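/- Let α ∈ (0,1) and let Ψ : ℝⁿ → ℝⁿ be the rigid motion Ψ(X) = c + QX where Q is an orthogonal matrix and c ∈ ℝⁿ. Then the fractional deformation gradient tensor F̃ with entries F̃_{ij} = (1/2)Γ(2-α)[ L_{A_j}^{α-1}·(1/Γ(1-α))∫_{X_{A_j}}^{X_j} ∂_j Ψ_i (X_j − R_j)^{-α} dR_j + L_{B_j}^{α-1}·(1/Γ(1-α))∫_{X_j}^{X_{B_j}} ∂_j Ψ_i (R_j − X_j)^{-α} dR_j ] (with L_{A_j} = X_j − X_{A_j}, L_{B_j} = X_{B_j} − X_j) satisfies F̃ = Q, and hence F̃ᵀF̃ = I. -/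

import Mathlib

/-!
The partial derivatives of a rigid motion are the constants `Q i j`, so each one-sided integral
of the fractional gradient is `a ∫₀ᴸ u^(-α) du = a L^(1-α) / (1-α)`. The prefactor `L^(α-1) / Γ(1-α)`
cancels the length scale and, by `Γ(2-α) = (1-α) Γ(1-α)`, turns each side into `a / Γ(2-α)`;
averaging the two sides with weight `Γ(2-α)` returns `a = Q i j`. Then `F̃ᵀ F̃ = Qᵀ Q = 1`.
-/

open MeasureTheory intervalIntegral Set Matrix

/-- Fractional deformation gradient: the `(i,j)` entry is the Riesz–Caputo
fractional derivative of order `α` of the `i`-th component of `Ψ` along the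
`j`-th coordinate direction, over the horizon `(XA j, XB j)` with length
scales `L_{A_j} = X j - XA j`, `L_{B_j} = XB j - X j`. -/
noncomputable def fracDefGrad (n : ℕ) (α : ℝ) (Ψ : (Fin n → ℝ) → (Fin n → ℝ))
    (X XA XB : Fin n → ℝ) : Matrix (Fin n) (Fin n) ℝ :=
  fun i j =>
    (1 / 2) * Real.Gamma (2 - α) *
      ((X j - XA j) ^ (α - 1) * ((1 / Real.Gamma (1 - α)) *
          ∫ r in XA j..(X j), deriv (fun t => Ψ (Function.update X j t) i) r / (X j - r) ^ α) +
       (XB j - X j) ^ (α - 1) * ((1 / Real.Gamma (1 - α)) *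
          ∫ r in (X j)..(XB j), deriv (fun t => Ψ (Function.update X j t) i) r / (r - X j) ^ α))

theorem hasDerivAt_dotProduct_update {ι : Type*} [Fintype ι] [DecidableEq ι] (w X : ι → ℝ)
    (j : ι) (t : ℝ) : HasDerivAt (fun t => w ⬝ᵥ Function.update X j t) (w j) t := by
  have hupdate := hasDerivAt_pi.1 (hasDerivAt_update X j t)
  have := HasDerivAt.fun_sum fun k (_ : k ∈ Finset.univ) => (hupdate k).const_mul (w k)
  simpa [dotProduct, Pi.single_apply] using this

theorem integral_inv_rpow {α : ℝ} (hα : α < 1) {L : ℝ} (hL : 0 ≤ L) :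
    ∫ u in (0 : ℝ)..L, (u ^ α)⁻¹ = L ^ (1 - α) / (1 - α) := by
  have hneg : EqOn (fun u : ℝ => (u ^ α)⁻¹) (fun u => u ^ (-α)) (uIcc 0 L) := by
    intro u hu
    rw [uIcc_of_le hL] at hu
    exact (Real.rpow_neg hu.1 α).symm
  rw [integral_congr hneg, integral_rpow (Or.inl (by linarith)),
    Real.zero_rpow (by linarith), neg_add_eq_sub, sub_zero]

theorem integral_div_sub_rpow {α : ℝ} (hα : α < 1) {A x : ℝ} (h : A ≤ x) (a : ℝ) :
    ∫ r in A..x, a / (x - r) ^ α = a * ((x - A) ^ (1 - α) / (1 - α)) := by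
  simp_rw [div_eq_mul_inv a]
  rw [intervalIntegral.integral_const_mul, integral_comp_sub_left (fun u => (u ^ α)⁻¹),
    sub_self, integral_inv_rpow hα (sub_nonneg.2 h)]

theorem integral_div_rpow_sub {α : ℝ} (hα : α < 1) {x B : ℝ} (h : x ≤ B) (a : ℝ) :
    ∫ r in x..B, a / (r - x) ^ α = a * ((B - x) ^ (1 - α) / (1 - α)) := by
  simp_rw [div_eq_mul_inv a]
  rw [intervalIntegral.integral_const_mul, integral_comp_sub_right (fun u => (u ^ α)⁻¹),
    sub_self, integral_inv_rpow hα (sub_nonneg.2 h)]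

theorem Real.Gamma_two_sub {α : ℝ} (hα : α ≠ 1) :
    Real.Gamma (2 - α) = (1 - α) * Real.Gamma (1 - α) := by
  rw [show 2 - α = (1 - α) + 1 by ring, Real.Gamma_add_one (sub_ne_zero.2 hα.symm)]

theorem rpow_sub_one_mul_div_Gamma_mul_rpow_one_sub {α : ℝ} (hα : α < 1) {L : ℝ} (hL : 0 < L)
    (a : ℝ) :
    L ^ (α - 1) * (1 / Real.Gamma (1 - α) * (a * (L ^ (1 - α) / (1 - α)))) =
      a / Real.Gamma (2 - α) := by
  have hcancel : L ^ (α - 1) * L ^ (1 - α) = 1 := by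
    rw [← Real.rpow_add hL, sub_add_sub_cancel', sub_self, Real.rpow_zero]
  have hα' : 1 - α ≠ 0 := by linarith
  have hΓ : Real.Gamma (1 - α) ≠ 0 := (Real.Gamma_pos_of_pos (by linarith)).ne'
  rw [Real.Gamma_two_sub hα.ne]
  field_simp
  linear_combination a * hcancel

theorem rieszCaputo_of_deriv_eq_const {f : ℝ → ℝ} {a α A x B : ℝ} (hf : ∀ r, deriv f r = a)
    (hα : α < 1) (hA : A < x) (hB : x < B) :
    (1 / 2) * Real.Gamma (2 - α) *
      ((x - A) ^ (α - 1) * ((1 / Real.Gamma (1 - α)) *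
          ∫ r in A..x, deriv f r / (x - r) ^ α) +
       (B - x) ^ (α - 1) * ((1 / Real.Gamma (1 - α)) *
          ∫ r in x..B, deriv f r / (r - x) ^ α)) = a := by
  have hΓ : Real.Gamma (2 - α) ≠ 0 := (Real.Gamma_pos_of_pos (by linarith)).ne'
  simp only [hf, integral_div_sub_rpow hα hA.le, integral_div_rpow_sub hα hB.le,
    rpow_sub_one_mul_div_Gamma_mul_rpow_one_sub hα (sub_pos.2 hA),
    rpow_sub_one_mul_div_Gamma_mul_rpow_one_sub hα (sub_pos.2 hB)]
  field_simp
  ring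

theorem fracDefGrad_rigid_motion (n : ℕ) (α : ℝ) (hα : α ∈ Set.Ioo (0 : ℝ) 1)
    (c : Fin n → ℝ) (Q : Matrix (Fin n) (Fin n) ℝ) (hQ : Qᵀ * Q = 1)
    (Ψ : (Fin n → ℝ) → (Fin n → ℝ)) (hΨ : ∀ X, Ψ X = c + Q.mulVec X)
    (X XA XB : Fin n → ℝ) (hhor : ∀ j, XA j < X j ∧ X j < XB j) :
    fracDefGrad n α Ψ X XA XB = Q ∧
      (fracDefGrad n α Ψ X XA XB)ᵀ * fracDefGrad n α Ψ X XA XB = 1 := by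
  have hF : fracDefGrad n α Ψ X XA XB = Q := by
    ext i j
    have hpartial : ∀ r, deriv (fun t => Ψ (Function.update X j t) i) r = Q i j := fun r => by
      simp only [hΨ]
      exact ((hasDerivAt_dotProduct_update (Q i) X j r).const_add (c i)).deriv
    exact rieszCaputo_of_deriv_eq_const hpartial hα.2 (hhor j).1 (hhor j).2
  exact ⟨hF, hF ▸ hQ⟩
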